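/- Bessel function product bound: Let N ≥ 0 be an integer and j the first positive zero of J_N. Then for every x ∈ (0, j], 0 ≤ J_N(x) ≤ (x^N/(2^N·N!))·(1 − x²/j²). -/

import Mathlib

/-!
Write `J_N(x) = x^N ψ(x²)`, where `ψ` is an entire power series with `ψ(0) = 1/(2^N N!)`.
Since `ψ` vanishes at `j²` but nowhere on `(0, j²)`, it is positive on `[0, j²)`. Moreover
`ψ` solves `t ψ'' + (N+1) ψ' + ψ/4 = 0`, and `ψ'` solves the same equation with `N + 1`:
at a first zero of `ψ''` in `(0, j²)` the first equation would give `ψ' < 0` and the second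
`ψ''' > 0`, impossible since `ψ''(0) > 0`. So `ψ` is convex on `[0, j²]` and lies below its
chord from `(0, ψ(0))` to `(j², 0)`, which is the bound.
-/

open Real

/-- The Bessel function of the first kind of integer order `ν`, defined by its
everywhere-convergent power series. -/
noncomputable def besselJ (ν : ℕ) (x : ℝ) : ℝ :=
  ∑' k : ℕ, (-1 : ℝ) ^ k / ((k.factorial : ℝ) * ((k + ν).factorial : ℝ)) * (x / 2) ^ (ν + 2 * k)

open Set Filter Topology Nat

theorem pos_of_forall_ne_zero_Ioo {f : ℝ → ℝ} {a b : ℝ} (hf : ContinuousOn f (Ico a b))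
    (ha : 0 < f a) (hne : ∀ t ∈ Ioo a b, f t ≠ 0) : ∀ t ∈ Ico a b, 0 < f t := by
  rintro t ⟨hat, htb⟩
  by_contra! hft
  obtain ⟨s, hs, hfs⟩ := intermediate_value_Icc' hat (hf.mono (Icc_subset_Ico_right htb))
    ⟨hft, ha.le⟩
  have has : a ≠ s := by rintro rfl; exact ha.ne' hfs
  exact hne s ⟨lt_of_le_of_ne hs.1 has, hs.2.trans_lt htb⟩ hfs

theorem HasDerivAt.nonpos_of_pos_left_of_eq_zero {f : ℝ → ℝ} {f' a t : ℝ}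
    (hf : HasDerivAt f f' t) (hat : a < t) (hpos : ∀ s ∈ Ioo a t, 0 < f s) (ht : f t = 0) :
    f' ≤ 0 := by
  refine le_of_tendsto (hasDerivAt_iff_tendsto_slope_left_right.1 hf).1 ?_
  filter_upwards [Ioo_mem_nhdsLT hat] with s hs
  rw [slope_def_field, ht, sub_zero]
  exact div_nonpos_of_nonneg_of_nonpos (hpos s hs).le (sub_neg.2 hs.2).le

theorem pos_of_forall_eq_zero_deriv_pos {f f' : ℝ → ℝ} {a b : ℝ}
    (hf : ∀ t ∈ Ico a b, HasDerivAt f (f' t) t) (ha : 0 < f a)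
    (hzero : ∀ t ∈ Ioo a b, f t = 0 → 0 < f' t) : ∀ t ∈ Ico a b, 0 < f t := by
  have hcont : ContinuousOn f (Ico a b) := fun t ht ↦ (hf t ht).continuousAt.continuousWithinAt
  rintro s ⟨has, hsb⟩
  by_contra! hfs
  have hcont_s := hcont.mono (Icc_subset_Ico_right hsb)
  set Z := Icc a s ∩ f ⁻¹' {0}
  have hZ : Z.Nonempty := by
    obtain ⟨r, hr, hfr⟩ := intermediate_value_Icc' has hcont_s ⟨hfs, ha.le⟩
    exact ⟨r, hr, hfr⟩
  have hZ' : IsCompact Z := isCompact_Icc.of_isClosed_subset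
    (hcont_s.preimage_isClosed_of_isClosed isClosed_Icc isClosed_singleton) inter_subset_left
  obtain ⟨t₀, ⟨⟨hat₀, ht₀s⟩, hft₀ : f t₀ = 0⟩, ht₀least⟩ := hZ'.exists_isLeast hZ
  have hat₀' : a < t₀ := lt_of_le_of_ne hat₀ (by rintro rfl; exact ha.ne' hft₀)
  have hbefore : ∀ r ∈ Ioo a t₀, f r ≠ 0 := fun r hr hfr ↦
    (ht₀least ⟨⟨hr.1.le, hr.2.le.trans ht₀s⟩, hfr⟩).not_gt hr.2
  have hpos : ∀ r ∈ Ioo a t₀, 0 < f r := fun r hr ↦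
    pos_of_forall_ne_zero_Ioo (hcont.mono (Ico_subset_Ico_right (ht₀s.trans hsb.le))) ha hbefore
      r ⟨hr.1.le, hr.2⟩
  have ht₀b : t₀ ∈ Ioo a b := ⟨hat₀', ht₀s.trans_lt hsb⟩
  exact (hzero t₀ ht₀b hft₀).not_ge
    ((hf t₀ ⟨hat₀, ht₀b.2⟩).nonpos_of_pos_left_of_eq_zero hat₀' hpos hft₀)

theorem ConvexOn.le_mul_one_sub_div_of_eq_zero {f : ℝ → ℝ} {a t : ℝ}
    (hf : ConvexOn ℝ (Icc 0 a) f) (ha : 0 < a) (hfa : f a = 0) (ht : t ∈ Icc 0 a) :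
    f t ≤ f 0 * (1 - t / a) := by
  have hθ : 0 ≤ t / a := div_nonneg ht.1 ha.le
  have hθ' : 0 ≤ 1 - t / a := by rw [sub_nonneg, div_le_one ha]; exact ht.2
  have h := hf.2 (left_mem_Icc.2 ha.le) (right_mem_Icc.2 ha.le) hθ' hθ (by ring)
  simpa [div_mul_cancel₀ t ha.ne', hfa, mul_comm] using h

noncomputable def powerSeriesFn (b : ℕ → ℝ) (t : ℝ) : ℝ := ∑' k, b k * t ^ k

noncomputable def derivCoeffs (b : ℕ → ℝ) (k : ℕ) : ℝ := (k + 1) * b (k + 1)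

theorem powerSeriesFn_zero (b : ℕ → ℝ) : powerSeriesFn b 0 = b 0 := by
  rw [powerSeriesFn, tsum_eq_single 0 fun n hn ↦ by simp [zero_pow hn]]
  simp

theorem hasSum_mul_powerSeriesFn_derivCoeffs {c : ℕ → ℝ} {t : ℝ}
    (hc : Summable fun k ↦ derivCoeffs c k * t ^ k) :
    HasSum (fun k ↦ k * c k * t ^ k) (t * powerSeriesFn (derivCoeffs c) t) := by
  rw [powerSeriesFn]
  refine (hasSum_nat_add_iff' 1).mp ?_
  simpa [derivCoeffs, pow_succ, mul_comm, mul_left_comm, mul_assoc] using hc.hasSum.mul_left t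

def InvFactorialBounded (b : ℕ → ℝ) : Prop := ∀ k, |b k| ≤ (k ! : ℝ)⁻¹

/-- The recurrence on the coefficients of `ψ(t) = ∑ e k * t ^ k` expressing
`t ψ'' + (M + 1) ψ' + ψ / 4 = 0`; for `M = N` it is the equation of `x ↦ x⁻ᴺ J_N(x)` in `t = x²`. -/
def BesselRecurrence (M : ℝ) (e : ℕ → ℝ) : Prop :=
  ∀ k : ℕ, (k + 1) * (k + M + 1) * e (k + 1) = -e k / 4

theorem BesselRecurrence.derivCoeffs {M : ℝ} {e : ℕ → ℝ} (he : BesselRecurrence M e) :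
    BesselRecurrence (M + 1) (derivCoeffs e) := by
  intro k
  have h := he (k + 1)
  simp only [_root_.derivCoeffs]
  push_cast at h ⊢
  linear_combination (k + 1 : ℝ) * h

theorem InvFactorialBounded.derivCoeffs {b : ℕ → ℝ} (hb : InvFactorialBounded b) :
    InvFactorialBounded (derivCoeffs b) := by
  intro k
  have hk : (0 : ℝ) < k + 1 := by positivity
  rw [_root_.derivCoeffs, abs_mul, abs_of_pos hk]
  calc (k + 1) * |b (k + 1)| ≤ (k + 1) * ((k + 1)! : ℝ)⁻¹ := by gcongr; exact hb (k + 1)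
    _ = (k ! : ℝ)⁻¹ := by push_cast [factorial_succ]; field_simp

theorem InvFactorialBounded.summable {b : ℕ → ℝ} (hb : InvFactorialBounded b) (t : ℝ) :
    Summable fun k ↦ b k * t ^ k := by
  refine .of_norm_bounded (Real.summable_pow_div_factorial |t|) fun k ↦ ?_
  rw [norm_mul, norm_pow, Real.norm_eq_abs, Real.norm_eq_abs, div_eq_inv_mul]
  gcongr
  exact hb k

theorem nat_mul_pow_pred_le {y R : ℝ} (hy : 0 ≤ y) (hyR : y ≤ R) (hR : 1 ≤ R) (n : ℕ) :
    n * y ^ (n - 1) ≤ (2 * R) ^ n := by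
  rcases n with _ | n
  · simp
  calc ((n + 1 : ℕ) : ℝ) * y ^ (n + 1 - 1) ≤ 2 ^ (n + 1) * R ^ (n + 1) := by
        gcongr
        · exact_mod_cast (Nat.lt_two_pow_self).le
        · rw [Nat.add_sub_cancel]
          exact (pow_le_pow_left₀ hy hyR n).trans (pow_le_pow_right₀ hR n.le_succ)
    _ = (2 * R) ^ (n + 1) := (mul_pow 2 R _).symm

theorem hasDerivAt_powerSeriesFn {b : ℕ → ℝ} (hb : InvFactorialBounded b) (t : ℝ) :
    HasDerivAt (powerSeriesFn b) (powerSeriesFn (derivCoeffs b) t) t := by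
  set R := |t| + 1
  have hR : 1 ≤ R := by simp [R]
  have ht : t ∈ Metric.ball (0 : ℝ) R := by simp [R]
  have hbound : ∀ n, ∀ y ∈ Metric.ball (0 : ℝ) R,
      ‖b n * (n * y ^ (n - 1))‖ ≤ (2 * R) ^ n / n ! := by
    intro n y hy
    rw [mem_ball_zero_iff, Real.norm_eq_abs] at hy
    simp only [norm_mul, norm_pow, Real.norm_eq_abs, Nat.abs_cast, div_eq_inv_mul]
    exact mul_le_mul (hb n) (nat_mul_pow_pred_le (abs_nonneg y) hy.le hR n) (by positivity)
      (by positivity)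
  have hu := Real.summable_pow_div_factorial (2 * R)
  have hderiv := hasDerivAt_tsum_of_isPreconnected hu Metric.isOpen_ball
    (convex_ball (0 : ℝ) R).isPreconnected
    (fun n y _ ↦ (hasDerivAt_pow n y).const_mul (b n)) hbound
    (Metric.mem_ball_self (by linarith)) (hb.summable 0) ht
  refine hderiv.congr_deriv ?_
  rw [(Summable.of_norm_bounded hu fun n ↦ hbound n t ht).tsum_eq_zero_add, powerSeriesFn]
  simp [derivCoeffs, mul_left_comm, mul_assoc]

theorem continuous_powerSeriesFn {b : ℕ → ℝ} (hb : InvFactorialBounded b) :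
    Continuous (powerSeriesFn b) :=
  continuous_iff_continuousAt.2 fun t ↦ (hasDerivAt_powerSeriesFn hb t).continuousAt

theorem powerSeriesFn_ode {M : ℝ} {e : ℕ → ℝ} (he : InvFactorialBounded e)
    (hrec : BesselRecurrence M e) (t : ℝ) :
    t * powerSeriesFn (derivCoeffs (derivCoeffs e)) t + (M + 1) * powerSeriesFn (derivCoeffs e) t
      + powerSeriesFn e t / 4 = 0 := by
  have h := ((hasSum_mul_powerSeriesFn_derivCoeffs (he.derivCoeffs.derivCoeffs.summable t)).add
    ((he.derivCoeffs.summable t).hasSum.mul_left (M + 1))).add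
    ((he.summable t).hasSum.div_const 4)
  refine h.unique ?_
  convert hasSum_zero with k
  simp only [derivCoeffs]
  linear_combination t ^ k * hrec k

noncomputable def besselCoeff (N k : ℕ) : ℝ := (-1) ^ k / (k ! * (k + N)! * 2 ^ (N + 2 * k))

theorem besselJ_eq_mul_powerSeriesFn (N : ℕ) (x : ℝ) :
    besselJ N x = x ^ N * powerSeriesFn (besselCoeff N) (x ^ 2) := by
  rw [powerSeriesFn, ← tsum_mul_left]
  refine tsum_congr fun k ↦ ?_
  rw [besselCoeff, div_pow, pow_add, pow_mul, pow_add]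
  field_simp

theorem invFactorialBounded_besselCoeff (N : ℕ) : InvFactorialBounded (besselCoeff N) := by
  intro k
  rw [besselCoeff, abs_div, abs_pow, abs_neg, abs_one, one_pow, abs_of_pos (by positivity),
    one_div]
  gcongr
  calc (k ! : ℝ) = k ! * 1 * 1 := by ring
    _ ≤ k ! * (k + N)! * 2 ^ (N + 2 * k) := by
      gcongr
      · exact_mod_cast (k + N).factorial_pos
      · exact one_le_pow₀ one_le_two

theorem besselRecurrence_besselCoeff (N : ℕ) : BesselRecurrence N (besselCoeff N) := by
  intro k
  rw [besselCoeff, besselCoeff, show k + 1 + N = (k + N) + 1 by ring,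
    show N + 2 * (k + 1) = (N + 2 * k) + 2 by ring]
  push_cast [factorial_succ, pow_add, pow_succ]
  field_simp
  ring

theorem besselCoeff_zero (N : ℕ) : besselCoeff N 0 = (2 ^ N * (N ! : ℝ))⁻¹ := by
  simp [besselCoeff, mul_comm]

theorem derivCoeffs_derivCoeffs_besselCoeff_zero_pos (N : ℕ) :
    0 < derivCoeffs (derivCoeffs (besselCoeff N)) 0 := by
  simp only [derivCoeffs, besselCoeff]
  norm_num
  positivity

section BesselSeries

variable {N : ℕ} {a : ℝ}

theorem powerSeriesFn_besselCoeff_pos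
    (hne : ∀ t ∈ Ioo 0 a, powerSeriesFn (besselCoeff N) t ≠ 0) :
    ∀ t ∈ Ico 0 a, 0 < powerSeriesFn (besselCoeff N) t :=
  pos_of_forall_ne_zero_Ioo
    (continuous_powerSeriesFn (invFactorialBounded_besselCoeff N)).continuousOn
    (by rw [powerSeriesFn_zero, besselCoeff_zero]; positivity) hne

theorem powerSeriesFn_besselCoeff_deriv2_pos
    (hpos : ∀ t ∈ Ico 0 a, 0 < powerSeriesFn (besselCoeff N) t) :
    ∀ t ∈ Ico 0 a, 0 < powerSeriesFn (derivCoeffs (derivCoeffs (besselCoeff N))) t := by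
  have hb := invFactorialBounded_besselCoeff N
  have hrec := besselRecurrence_besselCoeff N
  refine pos_of_forall_eq_zero_deriv_pos
    (fun t _ ↦ hasDerivAt_powerSeriesFn hb.derivCoeffs.derivCoeffs t)
    (by rw [powerSeriesFn_zero]; exact derivCoeffs_derivCoeffs_besselCoeff_zero_pos N) ?_
  intro t ht hzero
  have hψ := hpos t ⟨ht.1.le, ht.2⟩
  have hode := powerSeriesFn_ode hb hrec t
  have hode' := powerSeriesFn_ode hb.derivCoeffs hrec.derivCoeffs t
  rw [hzero] at hode hode'
  -- where the second derivative vanishes, the first equation makes the first derivative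
  -- negative, and then the second equation makes the third derivative positive
  have hψ' : powerSeriesFn (derivCoeffs (besselCoeff N)) t < 0 := by nlinarith
  have : 0 < t * powerSeriesFn (derivCoeffs (derivCoeffs (derivCoeffs (besselCoeff N)))) t := by
    linarith
  exact pos_of_mul_pos_right this ht.1.le

theorem convexOn_powerSeriesFn_besselCoeff
    (hne : ∀ t ∈ Ioo 0 a, powerSeriesFn (besselCoeff N) t ≠ 0) :
    ConvexOn ℝ (Icc 0 a) (powerSeriesFn (besselCoeff N)) := by
  have hb := invFactorialBounded_besselCoeff N
  refine convexOn_of_hasDerivWithinAt2_nonneg (convex_Icc 0 a)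
    (continuous_powerSeriesFn hb).continuousOn
    (fun t _ ↦ (hasDerivAt_powerSeriesFn hb t).hasDerivWithinAt)
    (fun t _ ↦ (hasDerivAt_powerSeriesFn hb.derivCoeffs t).hasDerivWithinAt) ?_
  rw [interior_Icc]
  exact fun t ht ↦ (powerSeriesFn_besselCoeff_deriv2_pos (powerSeriesFn_besselCoeff_pos hne) t
    ⟨ht.1.le, ht.2⟩).le

theorem powerSeriesFn_besselCoeff_mem_Icc (ha : 0 < a)
    (hψa : powerSeriesFn (besselCoeff N) a = 0)
    (hne : ∀ t ∈ Ioo 0 a, powerSeriesFn (besselCoeff N) t ≠ 0) {t : ℝ} (ht : t ∈ Icc 0 a) :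
    powerSeriesFn (besselCoeff N) t ∈ Icc 0 ((2 ^ N * (N ! : ℝ))⁻¹ * (1 - t / a)) := by
  refine ⟨?_, ?_⟩
  · rcases ht.2.lt_or_eq with hta | rfl
    · exact (powerSeriesFn_besselCoeff_pos hne t ⟨ht.1, hta⟩).le
    · exact hψa.ge
  · rw [← besselCoeff_zero, ← powerSeriesFn_zero (besselCoeff N)]
    exact (convexOn_powerSeriesFn_besselCoeff hne).le_mul_one_sub_div_of_eq_zero ha hψa ht

end BesselSeries

/-- Bessel function product bound: for `x ∈ (0, j]`, where `j` is the first positive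
zero of `J_N`, one has `0 ≤ J_N(x) ≤ (x^N/(2^N·N!))·(1 − x²/j²)`. -/
theorem besselJ_product_bound (N : ℕ) (j : ℝ) (hj : 0 < j) (hjz : besselJ N j = 0)
    (hj_first : ∀ t : ℝ, 0 < t → t < j → besselJ N t ≠ 0)
    (x : ℝ) (hx : 0 < x) (hxj : x ≤ j) :
    0 ≤ besselJ N x ∧
      besselJ N x ≤ x ^ N / (2 ^ N * (N.factorial : ℝ)) * (1 - x ^ 2 / j ^ 2) := by
  have hψj : powerSeriesFn (besselCoeff N) (j ^ 2) = 0 := by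
    simpa [besselJ_eq_mul_powerSeriesFn, hj.ne'] using hjz
  have hne : ∀ t ∈ Ioo 0 (j ^ 2), powerSeriesFn (besselCoeff N) t ≠ 0 := by
    rintro t ⟨ht, htj⟩ hψt
    refine hj_first √t (sqrt_pos.2 ht) ((sqrt_lt' hj).2 htj) ?_
    rw [besselJ_eq_mul_powerSeriesFn, sq_sqrt ht.le, hψt, mul_zero]
  have hx2 : x ^ 2 ∈ Icc 0 (j ^ 2) := ⟨by positivity, by gcongr⟩
  obtain ⟨hlow, hup⟩ := powerSeriesFn_besselCoeff_mem_Icc (by positivity) hψj hne hx2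
  rw [besselJ_eq_mul_powerSeriesFn, div_eq_mul_inv, mul_assoc]
  exact ⟨by positivity, by gcongr⟩
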